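/- arXiv:2408.04272 — 12 statements merged into one kernel-verified Lean document; each statement's English description precedes it below -/
import Mathlib

section
/- The surge demand admits the linear lower bound D_s(t) ≥ D_0 − t·((μ − λ) + D_0·f(D_0)) for every t ∈ ℕ. -/
theorem stmt_5
    (lam mu : ℝ) (hlam : 0 ≤ lam) (hlt : lam < mu)
    (f : ℝ → ℝ) (hf_mono : Monotone f)
    (hf_range : ∀ x, f x ∈ Set.Icc (0:ℝ) 1)
    (hf_zero : ∀ x, x ≤ 0 → f x = 0)
    (D0 d0 : ℝ) (hD0 : 0 ≤ D0) (hd0 : 0 ≤ d0)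
    (Ds Dns : ℕ → ℝ)
    (hDs0 : Ds 0 = D0) (hDns0 : Dns 0 = d0)
    (hDs : ∀ t, Ds (t+1) = max 0 (Ds t + (lam - mu) - f (Ds t - Dns t) * Ds t))
    (hDns : ∀ t, Dns (t+1) = max 0 (Dns t + (lam - mu) + f (Ds t - Dns t) * Ds t)) :
    ∀ t : ℕ, D0 - (t : ℝ) * ((mu - lam) + D0 * f D0) ≤ Ds t := by
  have hDsnn : ∀ t, 0 ≤ Ds t := by
    intro t
    cases t with
    | zero => rw [hDs0]; exact hD0
    | succ n => rw [hDs]; exact le_max_left _ _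
  have hDnsnn : ∀ t, 0 ≤ Dns t := by
    intro t
    cases t with
    | zero => rw [hDns0]; exact hd0
    | succ n => rw [hDns]; exact le_max_left _ _
  have hDsle : ∀ t, Ds t ≤ D0 := by
    intro t
    induction t with
    | zero => rw [hDs0]
    | succ n ih =>
      rw [hDs]
      apply max_le hD0
      have hfnn := (hf_range (Ds n - Dns n)).1
      nlinarith [hDsnn n]
  have key : ∀ t, f (Ds t - Dns t) * Ds t ≤ D0 * f D0 := by
    intro t
    have h1 : f (Ds t - Dns t) ≤ f D0 := by
      apply hf_mono
      have := hDnsnn t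
      have := hDsle t
      linarith
    have h2 := (hf_range (Ds t - Dns t)).1
    have h3 := (hf_range D0).1
    nlinarith [hDsnn t, hDsle t]
  intro t
  induction t with
  | zero => simp [hDs0]
  | succ n ih =>
    rw [hDs]
    have : Ds n + (lam - mu) - f (Ds n - Dns n) * Ds n ≤
        max 0 (Ds n + (lam - mu) - f (Ds n - Dns n) * Ds n) := le_max_right _ _
    have hk := key n
    push_cast
    nlinarith
end

section
/- Lower bound on the surge clearing time: for every T ∈ ℕ with D_s(T) = 0, we have T·((μ − λ) + D_0·f(D_0)) ≥ D_0; in particular any time T at which the surge demand has cleared satisfies T ≥ D_0/((μ − λ) + D_0·f(D_0)). -/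
theorem stmt_6
    (lam mu : ℝ) (hlam : 0 ≤ lam) (hlt : lam < mu)
    (f : ℝ → ℝ) (hf_mono : Monotone f)
    (hf_range : ∀ x, f x ∈ Set.Icc (0:ℝ) 1)
    (hf_zero : ∀ x, x ≤ 0 → f x = 0)
    (D0 d0 : ℝ) (hD0 : 0 ≤ D0) (hd0 : 0 ≤ d0)
    (Ds Dns : ℕ → ℝ)
    (hDs0 : Ds 0 = D0) (hDns0 : Dns 0 = d0)
    (hDs : ∀ t, Ds (t+1) = max 0 (Ds t + (lam - mu) - f (Ds t - Dns t) * Ds t))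
    (hDns : ∀ t, Dns (t+1) = max 0 (Dns t + (lam - mu) + f (Ds t - Dns t) * Ds t)) :
    ∀ T : ℕ, Ds T = 0 → D0 ≤ (T : ℝ) * ((mu - lam) + D0 * f D0) ∧ (T : ℝ) ≥ D0 / ((mu - lam) + D0 * f D0) := by
  have hC0 : 0 ≤ f D0 := (hf_range D0).1
  set C := (mu - lam) + D0 * f D0 with hCdef
  have hCpos : 0 < C := by
    have := mul_nonneg hD0 hC0
    simp only [hCdef]; linarith
  have key : ∀ t, 0 ≤ Ds t ∧ 0 ≤ Dns t ∧ Ds t ≤ D0 := by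
    intro t
    induction t with
    | zero => exact ⟨hDs0 ▸ hD0, hDns0 ▸ hd0, hDs0.le⟩
    | succ n ih =>
      obtain ⟨h1, h2, h3⟩ := ih
      have hfnn : 0 ≤ f (Ds n - Dns n) := (hf_range _).1
      have hmulnn : 0 ≤ f (Ds n - Dns n) * Ds n := mul_nonneg hfnn h1
      refine ⟨?_, ?_, ?_⟩
      · rw [hDs n]; exact le_max_left _ _
      · rw [hDns n]; exact le_max_left _ _
      · rw [hDs n]
        exact max_le hD0 (by linarith)
  have lower : ∀ t, D0 - t * C ≤ Ds t := by
    intro t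
    induction t with
    | zero => simp [hDs0]
    | succ n ih =>
      obtain ⟨h1, h2, h3⟩ := key n
      have hfle : f (Ds n - Dns n) ≤ f D0 := hf_mono (by linarith)
      have hfnn : 0 ≤ f (Ds n - Dns n) := (hf_range _).1
      have hmul : f (Ds n - Dns n) * Ds n ≤ f D0 * D0 :=
        mul_le_mul hfle h3 h1 hC0
      rw [hDs n]
      refine le_trans ?_ (le_max_right _ _)
      have : ((n : ℝ) + 1) * C = n * C + C := by ring
      push_cast
      simp only [hCdef] at this ⊢
      nlinarith
  intro T hT
  have h1 := lower T
  rw [hT] at h1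
  constructor
  · linarith
  · rw [ge_iff_le, div_le_iff₀ hCpos]; linarith
end

section
/- The total unmet demand decreases by at least the excess supply in each zone per step until it clears: for every t ∈ ℕ, D_s(t) + D_ns(t) ≤ max(0, D_0 + d_0 − t·(μ − λ)). -/
theorem stmt_7
    (lam mu : ℝ) (hlam : 0 ≤ lam) (hlt : lam < mu)
    (f : ℝ → ℝ) (hf_mono : Monotone f)
    (hf_range : ∀ x, f x ∈ Set.Icc (0:ℝ) 1)
    (hf_zero : ∀ x, x ≤ 0 → f x = 0)
    (D0 d0 : ℝ) (hD0 : 0 ≤ D0) (hd0 : 0 ≤ d0)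
    (Ds Dns : ℕ → ℝ)
    (hDs0 : Ds 0 = D0) (hDns0 : Dns 0 = d0)
    (hDs : ∀ t, Ds (t+1) = max 0 (Ds t + (lam - mu) - f (Ds t - Dns t) * Ds t))
    (hDns : ∀ t, Dns (t+1) = max 0 (Dns t + (lam - mu) + f (Ds t - Dns t) * Ds t)) :
    ∀ t : ℕ, Ds t + Dns t ≤ max 0 (D0 + d0 - (t : ℝ) * (mu - lam)) := by
  have hnonneg : ∀ t, 0 ≤ Ds t ∧ 0 ≤ Dns t := by
    intro t
    cases t with
    | zero => exact ⟨hDs0 ▸ hD0, hDns0 ▸ hd0⟩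
    | succ n => exact ⟨(hDs n) ▸ le_max_left _ _, (hDns n) ▸ le_max_left _ _⟩
  intro t
  induction t with
  | zero => simp [hDs0, hDns0]
  | succ t ih =>
    obtain ⟨hDt, hNt⟩ := hnonneg t
    set F := f (Ds t - Dns t) with hF
    have hF0 : 0 ≤ F := (hf_range _).1
    have hF1 : F ≤ 1 := (hf_range _).2
    have hFD0 : 0 ≤ F * Ds t := mul_nonneg hF0 hDt
    have hFD1 : F * Ds t ≤ Ds t := by nlinarith
    have h1 : Ds (t+1) + Dns (t+1) ≤ max 0 (Ds t + Dns t + (lam - mu)) := by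
      rw [hDs t, hDns t]
      rcases le_total (Ds t + (lam - mu) - F * Ds t) 0 with ha | ha <;>
        rcases le_total (Dns t + (lam - mu) + F * Ds t) 0 with hb | hb
      · rw [max_eq_left ha, max_eq_left hb]; simp
      · rw [max_eq_left ha, max_eq_right hb]
        exact le_max_of_le_right (by nlinarith)
      · rw [max_eq_right ha, max_eq_left hb]
        exact le_max_of_le_right (by nlinarith)
      · rw [max_eq_right ha, max_eq_right hb]
        exact le_max_of_le_right (by nlinarith)
    have h2 : max 0 (Ds t + Dns t + (lam - mu)) ≤
        max 0 (max 0 (D0 + d0 - (t : ℝ) * (mu - lam)) + (lam - mu)) :=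
      max_le_max le_rfl (by linarith)
    refine (h1.trans h2).trans ?_
    rcases le_total (D0 + d0 - (t : ℝ) * (mu - lam)) 0 with hc | hc
    · rw [max_eq_left hc]
      simp only [zero_add]
      rw [max_eq_left (by linarith)]
      exact le_max_left _ _
    · rw [max_eq_right hc]
      push_cast
      apply max_le_max le_rfl
      nlinarith
end

section
/- The total unmet demand in the system converges to 0 in finite time: for every t ∈ ℕ with t·(μ − λ) ≥ D_0 + d_0, we have D_s(t) = 0 and D_ns(t) = 0. In particular the total unmet demand clears in at most ⌈(D_0 + d_0)/(μ − λ)⌉ time steps. -/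
theorem stmt_8
    (lam mu : ℝ) (hlam : 0 ≤ lam) (hlt : lam < mu)
    (f : ℝ → ℝ) (hf_mono : Monotone f)
    (hf_range : ∀ x, f x ∈ Set.Icc (0:ℝ) 1)
    (hf_zero : ∀ x, x ≤ 0 → f x = 0)
    (D0 d0 : ℝ) (hD0 : 0 ≤ D0) (hd0 : 0 ≤ d0)
    (Ds Dns : ℕ → ℝ)
    (hDs0 : Ds 0 = D0) (hDns0 : Dns 0 = d0)
    (hDs : ∀ t, Ds (t+1) = max 0 (Ds t + (lam - mu) - f (Ds t - Dns t) * Ds t))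
    (hDns : ∀ t, Dns (t+1) = max 0 (Dns t + (lam - mu) + f (Ds t - Dns t) * Ds t)) :
    ∀ t : ℕ, D0 + d0 ≤ (t : ℝ) * (mu - lam) → Ds t = 0 ∧ Dns t = 0 := by
  have hδ : 0 < mu - lam := by linarith
  have key : ∀ t : ℕ, 0 ≤ Ds t ∧ 0 ≤ Dns t ∧
      Ds t + Dns t ≤ max 0 (D0 + d0 - (t : ℝ) * (mu - lam)) := by
    intro t
    induction t with
    | zero =>
      refine ⟨by rw [hDs0]; exact hD0, by rw [hDns0]; exact hd0, ?_⟩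
      rw [hDs0, hDns0]
      exact le_max_of_le_right (by simp)
    | succ n ih =>
      obtain ⟨h1, h2, h3⟩ := ih
      have hf0 := (hf_range (Ds n - Dns n)).1
      have hf1 := (hf_range (Ds n - Dns n)).2
      have hfD : 0 ≤ f (Ds n - Dns n) * Ds n := mul_nonneg hf0 h1
      have hfD' : f (Ds n - Dns n) * Ds n ≤ Ds n := by nlinarith
      refine ⟨by rw [hDs n]; exact le_max_left _ _, by rw [hDns n]; exact le_max_left _ _, ?_⟩
      rw [hDs n, hDns n]
      have step : max 0 (Ds n + (lam - mu) - f (Ds n - Dns n) * Ds n) +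
          max 0 (Dns n + (lam - mu) + f (Ds n - Dns n) * Ds n) ≤
          max 0 (Ds n + Dns n - (mu - lam)) := by
        rcases le_or_gt (Ds n + (lam - mu) - f (Ds n - Dns n) * Ds n) 0 with ha | ha
        · rw [max_eq_left ha, zero_add]
          exact max_le_max le_rfl (by linarith)
        · rcases le_or_gt (Dns n + (lam - mu) + f (Ds n - Dns n) * Ds n) 0 with hb | hb
          · rw [max_eq_left hb, add_zero]
            exact max_le_max le_rfl (by linarith)
          · rw [max_eq_right ha.le, max_eq_right hb.le]
            exact le_max_of_le_right (by linarith)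
      refine step.trans ?_
      rcases le_or_gt (D0 + d0 - (n : ℝ) * (mu - lam)) 0 with hS | hS
      · have hT0 : Ds n + Dns n ≤ 0 := by
          rw [max_eq_left hS] at h3; exact h3
        rw [max_eq_left (by linarith)]
        exact le_max_left _ _
      · have h3' : Ds n + Dns n ≤ D0 + d0 - (n : ℝ) * (mu - lam) := by
          rw [max_eq_right hS.le] at h3; exact h3
        have : Ds n + Dns n - (mu - lam) ≤ D0 + d0 - ((n : ℝ) + 1) * (mu - lam) := by
          ring_nf; ring_nf at h3'; linarith
        refine (max_le_max le_rfl this).trans ?_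
        push_cast
        exact le_rfl
  intro t ht
  obtain ⟨h1, h2, h3⟩ := key t
  have : max 0 (D0 + d0 - (t : ℝ) * (mu - lam)) = 0 := max_eq_left (by linarith)
  constructor <;> linarith [this ▸ h3]
end

section
/- The peak time τ is well-defined: the set {t ∈ ℕ : f(D_s(t) − D_ns(t))·D_s(t) ≤ μ − λ} is nonempty, i.e., there exists a time step t at which the inflow of relocating riders into the non-surge zone does not exceed the excess supply μ − λ. -/
theorem stmt_9
    (lam mu : ℝ) (hlam : 0 ≤ lam) (hlt : lam < mu)
    (f : ℝ → ℝ) (hf_mono : Monotone f)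
    (hf_range : ∀ x, f x ∈ Set.Icc (0:ℝ) 1)
    (hf_zero : ∀ x, x ≤ 0 → f x = 0)
    (D0 d0 : ℝ) (hD0 : 0 ≤ D0) (hd0 : 0 ≤ d0)
    (Ds Dns : ℕ → ℝ)
    (hDs0 : Ds 0 = D0) (hDns0 : Dns 0 = d0)
    (hDs : ∀ t, Ds (t+1) = max 0 (Ds t + (lam - mu) - f (Ds t - Dns t) * Ds t))
    (hDns : ∀ t, Dns (t+1) = max 0 (Dns t + (lam - mu) + f (Ds t - Dns t) * Ds t)) :
    {t : ℕ | f (Ds t - Dns t) * Ds t ≤ mu - lam}.Nonempty := by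
  by_contra hne
  rw [Set.not_nonempty_iff_eq_empty] at hne
  have h : ∀ t, mu - lam < f (Ds t - Dns t) * Ds t := by
    intro t
    by_contra hc
    push_neg at hc
    have : t ∈ {t : ℕ | f (Ds t - Dns t) * Ds t ≤ mu - lam} := hc
    rw [hne] at this
    exact this
  have hml : 0 < mu - lam := by linarith
  -- each step Ds decreases by more than 2(mu-lam), and Ds(t+1) equals the inner value
  have hstep : ∀ t, Ds (t+1) ≤ Ds t - 2 * (mu - lam) := by
    intro t
    have hpos : Ds (t+1) ≠ 0 := by
      intro h0
      have := h (t+1)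
      rw [h0, mul_zero] at this
      linarith
    have := hDs t
    rcases le_or_gt (Ds t + (lam - mu) - f (Ds t - Dns t) * Ds t) 0 with hX | hX
    · exact absurd (by rw [this, max_eq_left hX]) hpos
    · rw [this, max_eq_right hX.le]
      have := h t
      linarith
  have hbound : ∀ n : ℕ, Ds n ≤ Ds 0 - 2 * (mu - lam) * n := by
    intro n
    induction n with
    | zero => simp
    | succ k ih =>
      have := hstep k
      push_cast
      push_cast at ih
      linarith
  have hnonneg : ∀ n, 0 ≤ Ds n := by
    intro n
    cases n with
    | zero => rw [hDs0]; exact hD0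
    | succ k => rw [hDs k]; exact le_max_left _ _
  obtain ⟨n, hn⟩ := exists_nat_gt (Ds 0 / (2 * (mu - lam)))
  have h2 : 0 < 2 * (mu - lam) := by linarith
  have : Ds 0 < 2 * (mu - lam) * n := by
    rwa [div_lt_iff₀ h2, mul_comm] at hn
  have := hbound n
  have := hnonneg n
  linarith
end

section
/- The demand gap across the surge boundary is non-increasing while the surge persists: for every t ∈ ℕ, if D_s(t+1) > 0 then D_s(t+1) − D_ns(t+1) ≤ D_s(t) − D_ns(t). -/
theorem stmt_11
    (lam mu : ℝ) (hlam : 0 ≤ lam) (hlt : lam < mu)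
    (f : ℝ → ℝ) (hf_mono : Monotone f)
    (hf_range : ∀ x, f x ∈ Set.Icc (0:ℝ) 1)
    (hf_zero : ∀ x, x ≤ 0 → f x = 0)
    (D0 d0 : ℝ) (hD0 : 0 ≤ D0) (hd0 : 0 ≤ d0)
    (Ds Dns : ℕ → ℝ)
    (hDs0 : Ds 0 = D0) (hDns0 : Dns 0 = d0)
    (hDs : ∀ t, Ds (t+1) = max 0 (Ds t + (lam - mu) - f (Ds t - Dns t) * Ds t))
    (hDns : ∀ t, Dns (t+1) = max 0 (Dns t + (lam - mu) + f (Ds t - Dns t) * Ds t)) :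
    ∀ t : ℕ, 0 < Ds (t+1) → Ds (t+1) - Dns (t+1) ≤ Ds t - Dns t := by
  intro t hpos
  have hDst : 0 ≤ Ds t := by
    cases t with
    | zero => rw [hDs0]; exact hD0
    | succ n => rw [hDs n]; exact le_max_left _ _
  have hf0 : 0 ≤ f (Ds t - Dns t) := (hf_range _).1
  have hx : 0 < Ds t + (lam - mu) - f (Ds t - Dns t) * Ds t := by
    rw [hDs t] at hpos
    rcases lt_max_iff.mp hpos with h | h
    · exact absurd h (lt_irrefl 0)
    · exact h
  have hEq : Ds (t+1) = Ds t + (lam - mu) - f (Ds t - Dns t) * Ds t := by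
    rw [hDs t]; exact max_eq_right hx.le
  have hle : Dns t + (lam - mu) + f (Ds t - Dns t) * Ds t ≤ Dns (t+1) := by
    rw [hDns t]; exact le_max_right _ _
  have hfD : 0 ≤ f (Ds t - Dns t) * Ds t := mul_nonneg hf0 hDst
  rw [hEq]
  nlinarith [hle]
end

section
/- The low-inflow condition is an invariant of the dynamics: for every t ∈ ℕ, if f(D_s(t) − D_ns(t))·D_s(t) ≤ μ − λ, then f(D_s(t+1) − D_ns(t+1))·D_s(t+1) ≤ μ − λ. -/
theorem stmt_12
    (lam mu : ℝ) (hlam : 0 ≤ lam) (hlt : lam < mu)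
    (f : ℝ → ℝ) (hf_mono : Monotone f)
    (hf_range : ∀ x, f x ∈ Set.Icc (0:ℝ) 1)
    (hf_zero : ∀ x, x ≤ 0 → f x = 0)
    (D0 d0 : ℝ) (hD0 : 0 ≤ D0) (hd0 : 0 ≤ d0)
    (Ds Dns : ℕ → ℝ)
    (hDs0 : Ds 0 = D0) (hDns0 : Dns 0 = d0)
    (hDs : ∀ t, Ds (t+1) = max 0 (Ds t + (lam - mu) - f (Ds t - Dns t) * Ds t))
    (hDns : ∀ t, Dns (t+1) = max 0 (Dns t + (lam - mu) + f (Ds t - Dns t) * Ds t)) :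
    ∀ t : ℕ, f (Ds t - Dns t) * Ds t ≤ mu - lam → f (Ds (t+1) - Dns (t+1)) * Ds (t+1) ≤ mu - lam := by
  have hDsnn : ∀ t, 0 ≤ Ds t := by
    intro t
    cases t with
    | zero => rw [hDs0]; exact hD0
    | succ n => rw [hDs n]; exact le_max_left _ _
  intro t hF
  set a := Ds t with ha'
  set b := Dns t with hb'
  have ha : 0 ≤ a := hDsnn t
  have hf0 : 0 ≤ f (a - b) := (hf_range _).1
  have hf1 : f (a - b) ≤ 1 := (hf_range _).2
  have hFnn : 0 ≤ f (a - b) * a := mul_nonneg hf0 ha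
  rw [hDs t, hDns t]
  rcases le_or_gt (a + (lam - mu) - f (a - b) * a) 0 with h | h
  · rw [max_eq_left h, mul_zero]
    linarith
  · rw [max_eq_right h.le]
    have hDns' : b + (lam - mu) + f (a - b) * a
        ≤ max 0 (b + (lam - mu) + f (a - b) * a) := le_max_right _ _
    have hmono : f (a + (lam - mu) - f (a - b) * a
          - max 0 (b + (lam - mu) + f (a - b) * a)) ≤ f (a - b) :=
      hf_mono (by linarith)
    have h1 : f (a + (lam - mu) - f (a - b) * a
          - max 0 (b + (lam - mu) + f (a - b) * a))
          * (a + (lam - mu) - f (a - b) * a)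
        ≤ f (a - b) * (a + (lam - mu) - f (a - b) * a) :=
      mul_le_mul_of_nonneg_right hmono h.le
    have h2 : f (a - b) * ((lam - mu) - f (a - b) * a) ≤ 0 :=
      mul_nonpos_of_nonneg_of_nonpos hf0 (by linarith)
    nlinarith
end

section
/- Once the relocation inflow falls below the excess supply, the non-surge demand is non-increasing forever after: for all t ∈ ℕ, if f(D_s(t) − D_ns(t))·D_s(t) ≤ μ − λ, then for every s ≥ t we have D_ns(s+1) ≤ D_ns(s). -/
theorem stmt_13
    (lam mu : ℝ) (hlam : 0 ≤ lam) (hlt : lam < mu)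
    (f : ℝ → ℝ) (hf_mono : Monotone f)
    (hf_range : ∀ x, f x ∈ Set.Icc (0:ℝ) 1)
    (hf_zero : ∀ x, x ≤ 0 → f x = 0)
    (D0 d0 : ℝ) (hD0 : 0 ≤ D0) (hd0 : 0 ≤ d0)
    (Ds Dns : ℕ → ℝ)
    (hDs0 : Ds 0 = D0) (hDns0 : Dns 0 = d0)
    (hDs : ∀ t, Ds (t+1) = max 0 (Ds t + (lam - mu) - f (Ds t - Dns t) * Ds t))
    (hDns : ∀ t, Dns (t+1) = max 0 (Dns t + (lam - mu) + f (Ds t - Dns t) * Ds t)) :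
    ∀ t : ℕ, f (Ds t - Dns t) * Ds t ≤ mu - lam → ∀ s ≥ t, Dns (s+1) ≤ Dns s := by
  have hfnn : ∀ x, 0 ≤ f x := fun x => (hf_range x).1
  have hDsnn : ∀ s, 0 ≤ Ds s := by
    intro s
    cases s with
    | zero => rw [hDs0]; exact hD0
    | succ n => rw [hDs n]; exact le_max_left _ _
  have hDnsnn : ∀ s, 0 ≤ Dns s := by
    intro s
    cases s with
    | zero => rw [hDns0]; exact hd0
    | succ n => rw [hDns n]; exact le_max_left _ _
  intro t ht
  have key : ∀ s, t ≤ s → f (Ds s - Dns s) * Ds s ≤ mu - lam := by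
    intro s hs
    induction s, hs using Nat.le_induction with
    | base => exact ht
    | succ n _ ih =>
      set a := Ds n with ha
      set b := Dns n with hb
      set g := f (a - b) * a with hg
      have hgnn : 0 ≤ g := mul_nonneg (hfnn _) (hDsnn n)
      have hDs1 : Ds (n+1) ≤ a := by
        rw [hDs n]
        exact max_le (hDsnn n) (by nlinarith)
      rcases le_or_gt (a - b) 0 with hab | hab
      · -- a ≤ b : g = 0 and new difference ≤ 0
        have hg0 : f (a - b) = 0 := hf_zero _ hab
        have hgz : g = 0 := by rw [hg, hg0, zero_mul]
        have hnd : Ds (n+1) - Dns (n+1) ≤ 0 := by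
          rw [hDs n, hDns n, ← ha, ← hb, ← hg, hgz]
          have : max 0 (a + (lam - mu) - 0) ≤ max 0 (b + (lam - mu) + 0) :=
            max_le_max le_rfl (by linarith)
          linarith
        rw [hf_zero _ hnd, zero_mul]
        linarith
      · -- a > b : new difference ≤ a - b
        have hnd : Ds (n+1) - Dns (n+1) ≤ a - b := by
          rcases le_or_gt (a + (lam - mu) - g) 0 with hc | hc
          · have h1 : Ds (n+1) = 0 := by
              rw [hDs n, ← ha, ← hb, ← hg]; exact max_eq_left hc
            have h2 := hDnsnn (n+1)
            linarith
          · have h1 : Ds (n+1) = a + (lam - mu) - g := by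
              rw [hDs n, ← ha, ← hb, ← hg]; exact max_eq_right hc.le
            have h2 : b + (lam - mu) + g ≤ Dns (n+1) := by
              rw [hDns n, ← ha, ← hb, ← hg]; exact le_max_right _ _
            linarith
        calc f (Ds (n+1) - Dns (n+1)) * Ds (n+1)
            ≤ f (a - b) * a :=
              mul_le_mul (hf_mono hnd) hDs1 (hDsnn _) (hfnn _)
          _ ≤ mu - lam := ih
  intro s hs
  rw [hDns s]
  refine max_le (hDnsnn s) ?_
  have := key s hs
  linarith
end

section
/- Single-peakedness of the non-surge demand (Theorem on the shape of D_ns): there exists τ ∈ ℕ such that D_ns(t+1) > D_ns(t) for all t < τ and D_ns(t+1) ≤ D_ns(t) for all t ≥ τ; moreover τ can be taken to be the least t ∈ ℕ satisfying f(D_s(t) − D_ns(t))·D_s(t) ≤ μ − λ. -/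
theorem stmt_14
    (lam mu : ℝ) (hlam : 0 ≤ lam) (hlt : lam < mu)
    (f : ℝ → ℝ) (hf_mono : Monotone f)
    (hf_range : ∀ x, f x ∈ Set.Icc (0:ℝ) 1)
    (hf_zero : ∀ x, x ≤ 0 → f x = 0)
    (D0 d0 : ℝ) (hD0 : 0 ≤ D0) (hd0 : 0 ≤ d0)
    (Ds Dns : ℕ → ℝ)
    (hDs0 : Ds 0 = D0) (hDns0 : Dns 0 = d0)
    (hDs : ∀ t, Ds (t+1) = max 0 (Ds t + (lam - mu) - f (Ds t - Dns t) * Ds t))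
    (hDns : ∀ t, Dns (t+1) = max 0 (Dns t + (lam - mu) + f (Ds t - Dns t) * Ds t)) :
    ∃ τ : ℕ, (∀ t < τ, Dns t < Dns (t+1)) ∧ (∀ t ≥ τ, Dns (t+1) ≤ Dns t) ∧ IsLeast {t : ℕ | f (Ds t - Dns t) * Ds t ≤ mu - lam} τ := by
  classical
  set c : ℝ := mu - lam with hc_def
  have hc : 0 < c := by simp [hc_def]; linarith
  set g : ℕ → ℝ := fun t => f (Ds t - Dns t) * Ds t with hg_def
  have hDs_nn : ∀ t, 0 ≤ Ds t := by
    intro t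
    cases t with
    | zero => rw [hDs0]; exact hD0
    | succ n => rw [hDs n]; exact le_max_left _ _
  have hDns_nn : ∀ t, 0 ≤ Dns t := by
    intro t
    cases t with
    | zero => rw [hDns0]; exact hd0
    | succ n => rw [hDns n]; exact le_max_left _ _
  have hg_nn : ∀ t, 0 ≤ g t := fun t => mul_nonneg (hf_range _).1 (hDs_nn t)
  -- persistence
  have hpers : ∀ t, g t ≤ c → g (t+1) ≤ c := by
    intro t ht
    by_cases hΔ : Ds (t+1) - Dns (t+1) ≤ 0
    · have : g (t+1) = 0 := by
        simp [hg_def, hf_zero _ hΔ]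
      linarith
    · push_neg at hΔ
      have hDspos : 0 < Ds (t+1) := lt_of_le_of_lt (hDns_nn (t+1)) (by linarith)
      have hA : Ds (t+1) = Ds t + (lam - mu) - g t := by
        rw [hDs t]
        rcases le_or_gt (Ds t + (lam - mu) - g t) 0 with h | h
        · exfalso; rw [hDs t] at hDspos; rw [max_eq_left h] at hDspos; linarith
        · exact max_eq_right h.le
      have hB : Dns t + (lam - mu) + g t ≤ Dns (t+1) := by
        rw [hDns t]; exact le_max_right _ _
      have hΔle : Ds (t+1) - Dns (t+1) ≤ Ds t - Dns t := by
        have := hg_nn t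
        rw [hA]; linarith
      have hfle : f (Ds (t+1) - Dns (t+1)) ≤ f (Ds t - Dns t) := hf_mono hΔle
      have hDsle : Ds (t+1) ≤ Ds t := by rw [hA]; have := hg_nn t; linarith
      calc g (t+1) = f (Ds (t+1) - Dns (t+1)) * Ds (t+1) := rfl
        _ ≤ f (Ds t - Dns t) * Ds t :=
            mul_le_mul hfle hDsle hDspos.le (hf_range _).1
        _ ≤ c := ht
  -- nonemptiness
  have hne : ∃ t, g t ≤ c := by
    by_contra h
    push_neg at h
    have hstep : ∀ t, Ds (t+1) ≤ Ds t - c := by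
      intro t
      rcases le_or_gt (Ds t + (lam - mu) - g t) 0 with hle | hlt'
      · exfalso
        have h0 : Ds (t+1) = 0 := by rw [hDs t, max_eq_left hle]
        have : g (t+1) = 0 := by simp [hg_def, h0]
        have := h (t+1); linarith
      · have : Ds (t+1) = Ds t + (lam - mu) - g t := by
          rw [hDs t]; exact max_eq_right hlt'.le
        have := h t; linarith [this]
    have hiter : ∀ n : ℕ, Ds n ≤ Ds 0 - n * c := by
      intro n
      induction n with
      | zero => simp
      | succ k ih =>
        have := hstep k
        push_cast
        linarith
    obtain ⟨n, hn⟩ := exists_nat_gt (Ds 0 / c)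
    have h1 : Ds 0 < n * c := by
      rwa [div_lt_iff₀ hc] at hn
    have := hiter n
    have := hDs_nn n
    linarith
  refine ⟨Nat.find hne, ?_, ?_, ?_, ?_⟩
  · intro t htlt
    have hgt : c < g t := by
      have := Nat.find_min hne htlt
      push_neg at this; exact this
    have : Dns t + (lam - mu) + g t ≤ Dns (t+1) := by
      rw [hDns t]; exact le_max_right _ _
    have : Dns t < Dns t + (lam - mu) + g t := by
      simp only [hc_def] at hgt; linarith
    linarith
  · intro t htge
    have hmem : g t ≤ c := by
      induction t with
      | zero =>
        have h0 : Nat.find hne = 0 := Nat.le_zero.mp htge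
        have hs := Nat.find_spec hne
        rwa [h0] at hs
      | succ k ih =>
        rcases Nat.lt_or_ge (Nat.find hne) (k+1) with h | h
        · exact hpers k (ih (Nat.lt_succ_iff.mp h))
        · have : Nat.find hne = k + 1 := le_antisymm htge h
          have hs := Nat.find_spec hne
          rwa [this] at hs
    have hin : Dns t + (lam - mu) + g t ≤ Dns t := by
      simp only [hc_def] at hmem; linarith
    rw [hDns t]
    exact max_le (hDns_nn t) hin
  · exact Nat.find_spec hne
  · intro t ht
    exact Nat.find_min' hne ht
end

section
/- Characterization of localized surges (no spill-over): the non-surge demand is non-increasing at every step (D_ns(t+1) ≤ D_ns(t) for all t ∈ ℕ) if and only if the initial demands satisfy D_0·f(D_0 − d_0) ≤ μ − λ. -/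
theorem stmt_15
    (lam mu : ℝ) (hlam : 0 ≤ lam) (hlt : lam < mu)
    (f : ℝ → ℝ) (hf_mono : Monotone f)
    (hf_range : ∀ x, f x ∈ Set.Icc (0:ℝ) 1)
    (hf_zero : ∀ x, x ≤ 0 → f x = 0)
    (D0 d0 : ℝ) (hD0 : 0 ≤ D0) (hd0 : 0 ≤ d0)
    (Ds Dns : ℕ → ℝ)
    (hDs0 : Ds 0 = D0) (hDns0 : Dns 0 = d0)
    (hDs : ∀ t, Ds (t+1) = max 0 (Ds t + (lam - mu) - f (Ds t - Dns t) * Ds t))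
    (hDns : ∀ t, Dns (t+1) = max 0 (Dns t + (lam - mu) + f (Ds t - Dns t) * Ds t)) :
    (∀ t : ℕ, Dns (t+1) ≤ Dns t) ↔ D0 * f (D0 - d0) ≤ mu - lam := by
  constructor
  · intro h
    have h0 := h 0
    rw [hDns 0, hDs0, hDns0] at h0
    have hle : d0 + (lam - mu) + f (D0 - d0) * D0 ≤ d0 :=
      le_trans (le_max_right _ _) h0
    linarith [hle, mul_comm (f (D0 - d0)) D0]
  · intro h0
    have key : ∀ t, f (Ds t - Dns t) * Ds t ≤ mu - lam ∧ 0 ≤ Ds t ∧ 0 ≤ Dns t := by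
      intro t
      induction t with
      | zero =>
        refine ⟨?_, ?_, ?_⟩
        · rw [hDs0, hDns0]; linarith [mul_comm (f (D0 - d0)) D0]
        · rw [hDs0]; exact hD0
        · rw [hDns0]; exact hd0
      | succ n ih =>
        obtain ⟨hF, hD, hd⟩ := ih
        have hF0 : 0 ≤ f (Ds n - Dns n) := (hf_range _).1
        have hFD : 0 ≤ f (Ds n - Dns n) * Ds n := mul_nonneg hF0 hD
        have hDs' : 0 ≤ Ds (n+1) := by rw [hDs]; exact le_max_left _ _
        have hDns' : 0 ≤ Dns (n+1) := by rw [hDns]; exact le_max_left _ _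
        refine ⟨?_, hDs', hDns'⟩
        by_cases hc : Ds n - Dns n ≤ 0
        · have hFz : f (Ds n - Dns n) = 0 := hf_zero _ hc
          have hle : Ds (n+1) ≤ Dns (n+1) := by
            rw [hDs, hDns, hFz]
            exact max_le_max le_rfl (by linarith)
          have hz : f (Ds (n+1) - Dns (n+1)) = 0 := hf_zero _ (by linarith)
          rw [hz]; simpa using by linarith
        · push_neg at hc
          have hdiff : Ds (n+1) - Dns (n+1) ≤ Ds n - Dns n := by
            rw [hDs, hDns]
            rcases max_cases 0 (Ds n + (lam - mu) - f (Ds n - Dns n) * Ds n) with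
              ⟨e1, h1⟩ | ⟨e1, h1⟩ <;>
            rcases max_cases 0 (Dns n + (lam - mu) + f (Ds n - Dns n) * Ds n) with
              ⟨e2, h2⟩ | ⟨e2, h2⟩ <;>
            rw [e1, e2] <;> linarith
          have h2 : Ds (n+1) ≤ Ds n := by
            rw [hDs]; exact max_le hD (by linarith)
          have h3 : f (Ds (n+1) - Dns (n+1)) ≤ f (Ds n - Dns n) :=
            hf_mono hdiff
          calc f (Ds (n+1) - Dns (n+1)) * Ds (n+1)
              ≤ f (Ds n - Dns n) * Ds (n+1) :=
                mul_le_mul_of_nonneg_right h3 hDs'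
            _ ≤ f (Ds n - Dns n) * Ds n := mul_le_mul_of_nonneg_left h2 hF0
            _ ≤ mu - lam := hF
    intro t
    obtain ⟨hF, hD, hd⟩ := key t
    rw [hDns]
    exact max_le hd (by linarith)
end

section
/- Both demand sequences are nonnegative and eventually identically zero: D_s(t) ≥ 0 and D_ns(t) ≥ 0 for all t ∈ ℕ, and there exists T ∈ ℕ such that for all t ≥ T, D_s(t) = 0 and D_ns(t) = 0. -/
theorem stmt_17
    (lam mu : ℝ) (hlam : 0 ≤ lam) (hlt : lam < mu)
    (f : ℝ → ℝ) (hf_mono : Monotone f)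
    (hf_range : ∀ x, f x ∈ Set.Icc (0:ℝ) 1)
    (hf_zero : ∀ x, x ≤ 0 → f x = 0)
    (D0 d0 : ℝ) (hD0 : 0 ≤ D0) (hd0 : 0 ≤ d0)
    (Ds Dns : ℕ → ℝ)
    (hDs0 : Ds 0 = D0) (hDns0 : Dns 0 = d0)
    (hDs : ∀ t, Ds (t+1) = max 0 (Ds t + (lam - mu) - f (Ds t - Dns t) * Ds t))
    (hDns : ∀ t, Dns (t+1) = max 0 (Dns t + (lam - mu) + f (Ds t - Dns t) * Ds t)) :
    (∀ t : ℕ, 0 ≤ Ds t ∧ 0 ≤ Dns t) ∧ ∃ T : ℕ, ∀ t ≥ T, Ds t = 0 ∧ Dns t = 0 := by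
  have hε : (0:ℝ) < mu - lam := by linarith
  have hnn : ∀ t, 0 ≤ Ds t ∧ 0 ≤ Dns t := by
    intro t
    cases t with
    | zero => exact ⟨hDs0 ▸ hD0, hDns0 ▸ hd0⟩
    | succ n => exact ⟨(hDs n) ▸ le_max_left _ _, (hDns n) ▸ le_max_left _ _⟩
  have hstep : ∀ t, Ds (t+1) + Dns (t+1) ≤ max 0 (Ds t + Dns t - (mu - lam)) := by
    intro t
    obtain ⟨h1, h2⟩ := hnn t
    obtain ⟨hf0, hf1⟩ := hf_range (Ds t - Dns t)
    have hfd0 : 0 ≤ f (Ds t - Dns t) * Ds t := mul_nonneg hf0 h1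
    have hfd1 : f (Ds t - Dns t) * Ds t ≤ Ds t := by nlinarith
    rw [hDs t, hDns t]
    rcases le_total (Ds t + (lam - mu) - f (Ds t - Dns t) * Ds t) 0 with hA | hA <;>
      rcases le_total (Dns t + (lam - mu) + f (Ds t - Dns t) * Ds t) 0 with hB | hB
    · rw [max_eq_left hA, max_eq_left hB]
      simpa using le_max_left (0:ℝ) _
    · rw [max_eq_left hA, max_eq_right hB]
      refine le_trans ?_ (le_max_right _ _); linarith
    · rw [max_eq_right hA, max_eq_left hB]
      refine le_trans ?_ (le_max_right _ _); linarith
    · rw [max_eq_right hA, max_eq_right hB]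
      refine le_trans ?_ (le_max_right _ _); linarith
  have hbound : ∀ t : ℕ, Ds t + Dns t ≤ max 0 (D0 + d0 - t * (mu - lam)) := by
    intro t
    induction t with
    | zero =>
      rw [hDs0, hDns0]
      refine le_trans ?_ (le_max_right _ _)
      push_cast; linarith
    | succ n ih =>
      refine le_trans (hstep n) ?_
      have hkey : Ds n + Dns n - (mu - lam) ≤ max 0 (D0 + d0 - (n+1 : ℕ) * (mu - lam)) := by
        rcases le_total (D0 + d0 - n * (mu - lam)) 0 with h | h
        · rw [max_eq_left h] at ih
          refine le_trans ?_ (le_max_left _ _); linarith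
        · rw [max_eq_right h] at ih
          refine le_trans ?_ (le_max_right _ _); push_cast; linarith
      exact max_le (le_max_left _ _) hkey
  refine ⟨hnn, ⟨Nat.ceil ((D0 + d0) / (mu - lam)), ?_⟩⟩
  intro t ht
  have hT : (D0 + d0) / (mu - lam) ≤ (Nat.ceil ((D0 + d0) / (mu - lam)) : ℝ) :=
    Nat.le_ceil _
  have htc : ((Nat.ceil ((D0 + d0) / (mu - lam)) : ℕ) : ℝ) ≤ (t : ℝ) := Nat.cast_le.mpr ht
  have hle : D0 + d0 ≤ t * (mu - lam) := by
    have := (div_le_iff₀ hε).mp (le_trans hT htc)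
    linarith
  have h0 : D0 + d0 - t * (mu - lam) ≤ 0 := by linarith
  have := hbound t
  rw [max_eq_left h0] at this
  obtain ⟨ha, hb⟩ := hnn t
  constructor <;> linarith
end

section
/- Combined convergence theorem for the surge demand: D_s is non-increasing, and the least time τ_s ∈ ℕ with D_s(τ_s) = 0 exists and satisfies D_0/((μ − λ) + D_0·f(D_0)) ≤ τ_s and τ_s·(μ − λ) < D_0 + (μ − λ) (i.e., τ_s ≤ ⌈D_0/(μ − λ)⌉). -/
theorem stmt_19
    (lam mu : ℝ) (hlam : 0 ≤ lam) (hlt : lam < mu)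
    (f : ℝ → ℝ) (hf_mono : Monotone f)
    (hf_range : ∀ x, f x ∈ Set.Icc (0:ℝ) 1)
    (hf_zero : ∀ x, x ≤ 0 → f x = 0)
    (D0 d0 : ℝ) (hD0 : 0 ≤ D0) (hd0 : 0 ≤ d0)
    (Ds Dns : ℕ → ℝ)
    (hDs0 : Ds 0 = D0) (hDns0 : Dns 0 = d0)
    (hDs : ∀ t, Ds (t+1) = max 0 (Ds t + (lam - mu) - f (Ds t - Dns t) * Ds t))
    (hDns : ∀ t, Dns (t+1) = max 0 (Dns t + (lam - mu) + f (Ds t - Dns t) * Ds t)) :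
    (∀ t : ℕ, Ds (t+1) ≤ Ds t) ∧ ∃ τs : ℕ, IsLeast {t : ℕ | Ds t = 0} τs ∧ D0 / ((mu - lam) + D0 * f D0) ≤ (τs : ℝ) ∧ (τs : ℝ) * (mu - lam) < D0 + (mu - lam) := by
  classical
  have hfnn : ∀ x, 0 ≤ f x := fun x => (hf_range x).1
  have hDsnn : ∀ t, 0 ≤ Ds t := by
    intro t
    cases t with
    | zero => rw [hDs0]; exact hD0
    | succ n => rw [hDs n]; exact le_max_left _ _
  have hDnsnn : ∀ t, 0 ≤ Dns t := by
    intro t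
    cases t with
    | zero => rw [hDns0]; exact hd0
    | succ n => rw [hDns n]; exact le_max_left _ _
  have hmono : ∀ t : ℕ, Ds (t+1) ≤ Ds t := by
    intro t
    rw [hDs t]
    apply max_le (hDsnn t)
    have := mul_nonneg (hfnn (Ds t - Dns t)) (hDsnn t)
    linarith
  have hDsle : ∀ t, Ds t ≤ D0 := by
    intro t
    induction t with
    | zero => rw [hDs0]
    | succ n ih => exact le_trans (hmono n) ih
  -- claim A
  have claimA : ∀ t : ℕ, Ds t = 0 ∨ Ds t ≤ D0 - t * (mu - lam) := by
    intro t
    induction t with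
    | zero => right; rw [hDs0]; simp
    | succ n ih =>
        rcases ih with h | h
        · left
          rw [hDs n, h]
          have he : (0:ℝ) + (lam - mu) - f (0 - Dns n) * 0 = lam - mu := by ring
          rw [he, max_eq_left (by linarith)]
        · rw [hDs n]
          rcases le_or_gt (Ds n + (lam - mu) - f (Ds n - Dns n) * Ds n) 0 with hc | hc
          · left; rw [max_eq_left hc]
          · right
            rw [max_eq_right hc.le]
            have hm := mul_nonneg (hfnn (Ds n - Dns n)) (hDsnn n)
            push_cast
            linarith
  have hne : ∃ t : ℕ, Ds t = 0 := by
    obtain ⟨N, hN⟩ := exists_nat_gt (D0 / (mu - lam))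
    refine ⟨N, ?_⟩
    rcases claimA N with h | h
    · exact h
    · exfalso
      have hc : 0 < mu - lam := by linarith
      have : D0 < N * (mu - lam) := by
        rw [div_lt_iff₀ hc] at hN; linarith
      have := hDsnn N
      linarith
  set τ := Nat.find hne with hτdef
  have hτ0 : Ds τ = 0 := Nat.find_spec hne
  have hτleast : IsLeast {t : ℕ | Ds t = 0} τ := by
    refine ⟨hτ0, fun t ht => Nat.find_le ht⟩
  refine ⟨hmono, τ, hτleast, ?_, ?_⟩
  · -- lower bound
    set K := (mu - lam) + D0 * f D0 with hK
    have hKpos : 0 < K := by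
      have := mul_nonneg hD0 (hfnn D0)
      rw [hK]; linarith
    have hstep : ∀ t : ℕ, D0 - t * K ≤ Ds t := by
      intro t
      induction t with
      | zero => rw [hDs0]; simp
      | succ n ih =>
          rw [hDs n]
          have h1 : f (Ds n - Dns n) ≤ f D0 := by
            apply hf_mono
            have := hDnsnn n
            have := hDsle n
            linarith
          have h2 : f (Ds n - Dns n) * Ds n ≤ f D0 * D0 :=
            mul_le_mul h1 (hDsle n) (hDsnn n) (hfnn D0)
          have h3 : D0 - ((n:ℝ)+1) * K ≤ Ds n + (lam - mu) - f (Ds n - Dns n) * Ds n := by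
            rw [hK]; nlinarith
          calc D0 - (↑(n+1):ℝ) * K = D0 - ((n:ℝ)+1) * K := by push_cast; ring
            _ ≤ _ := le_trans h3 (le_max_right _ _)
    have := hstep τ
    rw [hτ0] at this
    rw [div_le_iff₀ hKpos]
    linarith
  · -- upper bound
    cases' Nat.eq_zero_or_pos τ with h h
    · rw [h]; push_cast; nlinarith
    · obtain ⟨m, hm⟩ : ∃ m, τ = m + 1 := ⟨τ - 1, (Nat.succ_pred_eq_of_pos h).symm⟩
      have hmne : Ds m ≠ 0 := by
        intro hc
        have := hτleast.2 hc
        omega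
      rcases claimA m with h' | h'
      · exact absurd h' hmne
      · have hpos : 0 < Ds m := lt_of_le_of_ne (hDsnn m) (Ne.symm hmne)
        rw [hm]
        push_cast
        nlinarith
end
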